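/- Let N ≥ 1 and let ρ be a complex matrix indexed by (Fin N → Fin 2) that is Hermitian, positive semidefinite, and has trace 1. Then ρ is separable — i.e., there exist a finite index set, nonnegative reals p_k summing to 1, and for each k single-qubit density matrices ρᵏᵢ (2×2 Hermitian positive semidefinite of trace 1) with ρ = Σ_k p_k · ⊗_{i} ρᵏᵢ (the matrix with entries ∏_i ρᵏᵢ(b(i),b'(i))) — if and only if there exist such p_k and single-qubit density matrices ρᵏᵢ with Q_ρ(Ω) = Σ_k p_k ∏_{i} Q_{ρᵏᵢ}(θ_i,φ_i) for all Ω, where Q_ρ is the many-body Q function and Q_{ρᵏᵢ} are the single-qubit Q functions. -/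

import Mathlib

/-!
The Q function is linear in `ρ` and multiplicative on product matrices, so a separable
decomposition of `ρ` turns into the same convex decomposition of `Q_ρ`. Conversely, `Q_ρ`
determines `ρ`: the coherent projectors `|v⟩⟨v|` at the four points `(0,0)`, `(π,0)`, `(π/2,0)`,
`(π/2,π/2)` span all `2 × 2` matrices, hence their tensor products span all `N`-qubit matrices and
every entry of `ρ` is an explicit linear combination of values of `Q_ρ`. Two matrices with the same
Q function are therefore equal, and a factorization of `Q_ρ` forces the corresponding separable
decomposition of `ρ`.
-/

open Matrix Complex Real MeasureTheory
open scoped ComplexOrder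

noncomputable section

/-- The spin coherent state |θ,φ⟩ = cos(θ/2)|0⟩ + e^{iφ} sin(θ/2)|1⟩. -/
def cohVec (θ φ : ℝ) : Fin 2 → ℂ :=
  ![((Real.cos (θ / 2) : ℝ) : ℂ),
    Complex.exp (Complex.I * (φ : ℂ)) * ((Real.sin (θ / 2) : ℝ) : ℂ)]

/-- The single-qubit Husimi Q function. -/
def Qfun (A : Matrix (Fin 2) (Fin 2) ℂ) (θ φ : ℝ) : ℂ :=
  (1 / (2 * Real.pi) : ℂ) *
    ∑ k, ∑ l, (starRingEnd ℂ) (cohVec θ φ k) * A k l * cohVec θ φ l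

/-- The N-qubit coherent state v(Ω). -/
def cohVecN (N : ℕ) (θ φ : Fin N → ℝ) : (Fin N → Fin 2) → ℂ :=
  fun b => ∏ i, cohVec (θ i) (φ i) (b i)

/-- The many-body Q function Q_ρ(Ω) = (1/(2π))^N ⟨v(Ω)|ρ|v(Ω)⟩. -/
def QfunN (N : ℕ) (ρ : Matrix (Fin N → Fin 2) (Fin N → Fin 2) ℂ)
    (θ φ : Fin N → ℝ) : ℂ :=
  (1 / (2 * Real.pi) : ℂ) ^ N *
    ∑ b, ∑ b', (starRingEnd ℂ) (cohVecN N θ φ b) * ρ b b' * cohVecN N θ φ b'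

section ProductSums

variable {ι α β R : Type*} [Fintype ι] [DecidableEq ι] [Fintype β] [CommSemiring R]

theorem Fintype.sum_sum_prod_eq_prod_sum_sum [Fintype α] (f : ι → α → α → R) :
    ∑ b : ι → α, ∑ b' : ι → α, ∏ i, f i (b i) (b' i) = ∏ i, ∑ k, ∑ l, f i k l := by
  rw [Fintype.prod_sum]
  exact Fintype.sum_congr _ _ fun b => (Fintype.prod_sum _).symm

theorem Fintype.sum_prod_mul_prod_eq_ite [DecidableEq α] (c : α → α → β → R)
    (m : β → α → α → R) (hcm : ∀ k l k' l', ∑ j, c k l j * m j k' l' =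
      if k = k' ∧ l = l' then 1 else 0) (b b' a a' : ι → α) :
    ∑ J : ι → β, (∏ i, c (b i) (b' i) (J i)) * ∏ i, m (J i) (a i) (a' i) =
      if b = a ∧ b' = a' then 1 else 0 := by
  simp_rw [← Finset.prod_mul_distrib]
  rw [← Fintype.prod_sum (fun i j => c (b i) (b' i) j * m j (a i) (a' i))]
  simp_rw [hcm, Fintype.prod_boole, funext_iff, forall_and]

end ProductSums

def kroneckerPi {ι α R : Type*} [Fintype ι] [CommMonoid R] (σ : ι → Matrix α α R) :
    Matrix (ι → α) (ι → α) R :=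
  Matrix.of fun b b' => ∏ i, σ i (b i) (b' i)

def cohKernel (θ φ : ℝ) (k l : Fin 2) : ℂ :=
  (1 / (2 * π) : ℂ) * (starRingEnd ℂ) (cohVec θ φ k) * cohVec θ φ l

theorem Qfun_eq_sum_cohKernel (A : Matrix (Fin 2) (Fin 2) ℂ) (θ φ : ℝ) :
    Qfun A θ φ = ∑ k, ∑ l, cohKernel θ φ k l * A k l := by
  simp only [Qfun, cohKernel, Finset.mul_sum]
  exact Fintype.sum_congr _ _ fun k => Fintype.sum_congr _ _ fun l => by ring

theorem QfunN_eq_sum_prod_cohKernel (N : ℕ) (A : Matrix (Fin N → Fin 2) (Fin N → Fin 2) ℂ)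
    (θ φ : Fin N → ℝ) :
    QfunN N A θ φ =
      ∑ b, ∑ b', (∏ i, cohKernel (θ i) (φ i) (b i) (b' i)) * A b b' := by
  have hconst : (1 / (2 * π) : ℂ) ^ N = ∏ _i : Fin N, (1 / (2 * π) : ℂ) := by simp
  simp only [QfunN, cohVecN, cohKernel, hconst, map_prod, Finset.prod_mul_distrib,
    Finset.mul_sum]
  exact Fintype.sum_congr _ _ fun b => Fintype.sum_congr _ _ fun b' => by ring

theorem QfunN_sum_smul (N n : ℕ) (c : Fin n → ℂ)
    (A : Fin n → Matrix (Fin N → Fin 2) (Fin N → Fin 2) ℂ) (θ φ : Fin N → ℝ) :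
    QfunN N (∑ k, c k • A k) θ φ = ∑ k, c k * QfunN N (A k) θ φ := by
  simp only [QfunN_eq_sum_prod_cohKernel, Matrix.sum_apply, Matrix.smul_apply, smul_eq_mul,
    Finset.mul_sum]
  rw [eq_comm, Finset.sum_comm]
  exact Fintype.sum_congr _ _ fun b => Finset.sum_comm.trans
    (Fintype.sum_congr _ _ fun b' => Fintype.sum_congr _ _ fun k => by ring)

theorem QfunN_kroneckerPi (N : ℕ) (σ : Fin N → Matrix (Fin 2) (Fin 2) ℂ) (θ φ : Fin N → ℝ) :
    QfunN N (kroneckerPi σ) θ φ = ∏ i, Qfun (σ i) (θ i) (φ i) := by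
  simp_rw [QfunN_eq_sum_prod_cohKernel, Qfun_eq_sum_cohKernel, kroneckerPi, Matrix.of_apply]
  simp_rw [← Finset.prod_mul_distrib]
  exact Fintype.sum_sum_prod_eq_prod_sum_sum (fun i k l => cohKernel (θ i) (φ i) k l * σ i k l)

theorem QfunN_sum_smul_kroneckerPi (N n : ℕ) (c : Fin n → ℂ)
    (σ : Fin n → Fin N → Matrix (Fin 2) (Fin 2) ℂ) (θ φ : Fin N → ℝ) :
    QfunN N (∑ k, c k • kroneckerPi (σ k)) θ φ = ∑ k, c k * ∏ i, Qfun (σ k i) (θ i) (φ i) := by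
  simp only [QfunN_sum_smul, QfunN_kroneckerPi]

def frameAngles : Fin 4 → ℝ × ℝ := ![(0, 0), (π, 0), (π / 2, 0), (π / 2, π / 2)]

/-- Row `(k, l)` expresses the matrix unit `E_kl` in the frame of the four coherent projectors
`2π · cohKernel` at `frameAngles`, so that `A k l` is read off from the values of `Qfun A`. -/
def frameDual (k l : Fin 2) (j : Fin 4) : ℂ :=
  2 * π * ![![![1, 0, 0, 0], ![-(1 - I) / 2, -(1 - I) / 2, 1, -I]],
    ![![-(1 + I) / 2, -(1 + I) / 2, 1, I], ![0, 1, 0, 0]]] k l j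

theorem cohVec_frameAngles (j : Fin 4) :
    cohVec (frameAngles j).1 (frameAngles j).2 =
      (![![1, 0], ![0, 1], ![(√2 / 2 : ℝ), (√2 / 2 : ℝ)], ![(√2 / 2 : ℝ), I * (√2 / 2 : ℝ)]] :
        Fin 4 → Fin 2 → ℂ) j := by
  have hquarter : π / 2 / 2 = π / 4 := by ring
  have hexp : exp (I * (π / 2)) = I := by
    rw [mul_comm, exp_mul_I, Complex.cos_pi_div_two, Complex.sin_pi_div_two]
    simp
  fin_cases j <;>
    simp [frameAngles, cohVec, hquarter, hexp, Real.cos_pi_div_four, Real.sin_pi_div_four]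

theorem sum_frameDual_mul_cohKernel (k l k' l' : Fin 2) :
    ∑ j, frameDual k l j * cohKernel (frameAngles j).1 (frameAngles j).2 k' l' =
      if k = k' ∧ l = l' then 1 else 0 := by
  have hsqrt : ((√2 : ℝ) : ℂ) ^ 2 = 2 := by norm_cast; simp
  have hpi : (π : ℂ) ≠ 0 := ofReal_ne_zero.mpr pi_ne_zero
  simp only [frameDual, cohKernel, cohVec_frameAngles, Fin.sum_univ_four]
  fin_cases k <;> fin_cases l <;> fin_cases k' <;> fin_cases l' <;>
    simp <;> field_simp <;> ring_nf <;> simp [hsqrt, map_ofNat] <;> ring_nf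

theorem QfunN_inversion (N : ℕ) (A : Matrix (Fin N → Fin 2) (Fin N → Fin 2) ℂ)
    (b b' : Fin N → Fin 2) :
    A b b' = ∑ J : Fin N → Fin 4, (∏ i, frameDual (b i) (b' i) (J i)) *
      QfunN N A (fun i => (frameAngles (J i)).1) (fun i => (frameAngles (J i)).2) := by
  have hdual := Fintype.sum_prod_mul_prod_eq_ite frameDual
    (fun j => cohKernel (frameAngles j).1 (frameAngles j).2) sum_frameDual_mul_cohKernel b b'
  calc A b b' = ∑ a, ∑ a', (if b = a ∧ b' = a' then 1 else 0) * A a a' := by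
        simp [ite_and]
    _ = _ := by
      simp_rw [← hdual, Finset.sum_mul, mul_assoc, QfunN_eq_sum_prod_cohKernel, Finset.mul_sum]
      exact (Fintype.sum_congr _ _ fun a => Finset.sum_comm).trans Finset.sum_comm

theorem eq_of_QfunN_eq (N : ℕ) {A B : Matrix (Fin N → Fin 2) (Fin N → Fin 2) ℂ}
    (h : ∀ θ φ, QfunN N A θ φ = QfunN N B θ φ) : A = B := by
  ext b b'
  rw [QfunN_inversion N A, QfunN_inversion N B]
  simp_rw [h]

theorem separability_iff_q_factorization_general (N : ℕ)
    (ρ : Matrix (Fin N → Fin 2) (Fin N → Fin 2) ℂ) :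
    (∃ (n : ℕ) (p : Fin n → ℝ) (σ : Fin n → Fin N → Matrix (Fin 2) (Fin 2) ℂ),
      (∀ k, 0 ≤ p k) ∧ (∑ k, p k = 1) ∧
      (∀ k i, (σ k i).IsHermitian ∧ (σ k i).PosSemidef ∧ (σ k i).trace = 1) ∧
      ρ = ∑ k, (p k : ℂ) • Matrix.of (fun b b' => ∏ i, σ k i (b i) (b' i)))
    ↔
    (∃ (n : ℕ) (p : Fin n → ℝ) (σ : Fin n → Fin N → Matrix (Fin 2) (Fin 2) ℂ),
      (∀ k, 0 ≤ p k) ∧ (∑ k, p k = 1) ∧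
      (∀ k i, (σ k i).IsHermitian ∧ (σ k i).PosSemidef ∧ (σ k i).trace = 1) ∧
      ∀ θ φ : Fin N → ℝ,
        QfunN N ρ θ φ = ∑ k, (p k : ℂ) * ∏ i, Qfun (σ k i) (θ i) (φ i)) := by
  constructor
  · rintro ⟨n, p, σ, hp, hsum, hσ, rfl⟩
    exact ⟨n, p, σ, hp, hsum, hσ, QfunN_sum_smul_kroneckerPi N n (fun k => p k) σ⟩
  · rintro ⟨n, p, σ, hp, hsum, hσ, hQ⟩
    refine ⟨n, p, σ, hp, hsum, hσ, eq_of_QfunN_eq N fun θ φ => ?_⟩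
    exact (hQ θ φ).trans (QfunN_sum_smul_kroneckerPi N n (fun k => p k) σ θ φ).symm

/-- an N-qubit density matrix is separable if and only if its
many-body Q function admits a convex factorization into single-qubit Q functions. -/
theorem separability_iff_q_factorization (N : ℕ) (hN : 1 ≤ N)
    (ρ : Matrix (Fin N → Fin 2) (Fin N → Fin 2) ℂ)
    (hherm : ρ.IsHermitian) (hpos : ρ.PosSemidef) (htr : ρ.trace = 1) :
    (∃ (n : ℕ) (p : Fin n → ℝ) (σ : Fin n → Fin N → Matrix (Fin 2) (Fin 2) ℂ),
      (∀ k, 0 ≤ p k) ∧ (∑ k, p k = 1) ∧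
      (∀ k i, (σ k i).IsHermitian ∧ (σ k i).PosSemidef ∧ (σ k i).trace = 1) ∧
      ρ = ∑ k, (p k : ℂ) • Matrix.of (fun b b' => ∏ i, σ k i (b i) (b' i)))
    ↔
    (∃ (n : ℕ) (p : Fin n → ℝ) (σ : Fin n → Fin N → Matrix (Fin 2) (Fin 2) ℂ),
      (∀ k, 0 ≤ p k) ∧ (∑ k, p k = 1) ∧
      (∀ k i, (σ k i).IsHermitian ∧ (σ k i).PosSemidef ∧ (σ k i).trace = 1) ∧
      ∀ θ φ : Fin N → ℝ,
        QfunN N ρ θ φ = ∑ k, (p k : ℂ) * ∏ i, Qfun (σ k i) (θ i) (φ i)) :=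
  separability_iff_q_factorization_general N ρ
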